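/- arXiv:2104.00591 — 3 statements merged into one kernel-verified Lean document; each statement's English description precedes it below -/
import Mathlib

section
/- Let M be a negative definite symmetric real n×n matrix with nonnegative off-diagonal entries, and let a = (a_1,...,a_n) be a real vector such that (Ma)_j ≥ 0 for all j. Then a_i ≤ 0 for all i. -/
open Matrix

/-! Write `a = a⁺ - a⁻`. Then `a⁺ ⬝ᵥ M a⁺ = a⁺ ⬝ᵥ M a + a⁺ ⬝ᵥ M a⁻`: the first term is `≥ 0`
since `M a ≥ 0`, and so is the second, because `a⁺` and `a⁻` have disjoint supports, so only
off-diagonal entries of `M` contribute. Negative definiteness then forces `a⁺ = 0`. -/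

variable {ι R : Type*} [Fintype ι]

theorem dotProduct_mulVec_nonneg_of_disjoint_support [Semiring R] [PartialOrder R]
    [IsOrderedRing R] {M : Matrix ι ι R} (hoff : ∀ i j, i ≠ j → 0 ≤ M i j) {x y : ι → R}
    (hx : 0 ≤ x) (hy : 0 ≤ y) (hxy : ∀ i, x i = 0 ∨ y i = 0) :
    0 ≤ x ⬝ᵥ M *ᵥ y := by
  simp only [dotProduct, mulVec, Finset.mul_sum]
  refine Finset.sum_nonneg fun i _ => Finset.sum_nonneg fun j _ => ?_
  rcases eq_or_ne i j with rfl | hij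
  · rcases hxy i with hxi | hyi <;> simp [*]
  · exact mul_nonneg (hx i) (mul_nonneg (hoff i j hij) (hy j))

theorem posPart_dotProduct_mulVec_posPart_nonneg [Ring R] [LinearOrder R] [IsOrderedRing R]
    {M : Matrix ι ι R} (hoff : ∀ i j, i ≠ j → 0 ≤ M i j) {a : ι → R} (ha : 0 ≤ M *ᵥ a) :
    0 ≤ a⁺ ⬝ᵥ M *ᵥ a⁺ := by
  have hsplit : a⁺ ⬝ᵥ M *ᵥ a⁺ = a⁺ ⬝ᵥ M *ᵥ a + a⁺ ⬝ᵥ M *ᵥ a⁻ := by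
    nth_rw 2 [eq_add_of_sub_eq (posPart_sub_negPart a)]
    rw [mulVec_add, dotProduct_add]
  have hdisjoint : ∀ i, a⁺ i = 0 ∨ a⁻ i = 0 := fun i => by
    simp only [Pi.posPart_apply, Pi.negPart_apply, posPart_eq_zero, negPart_eq_zero]
    exact le_total _ _
  rw [hsplit]
  exact add_nonneg (dotProduct_nonneg_of_nonneg (posPart_nonneg a) ha)
    (dotProduct_mulVec_nonneg_of_disjoint_support hoff (posPart_nonneg a) (negPart_nonneg a)
      hdisjoint)

theorem neg_def_nonneg_mulVec_nonpos_general {n : ℕ} (M : Matrix (Fin n) (Fin n) ℝ)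
    (hneg : ∀ x : Fin n → ℝ, x ≠ 0 → x ⬝ᵥ M.mulVec x < 0)
    (hoff : ∀ i j : Fin n, i ≠ j → 0 ≤ M i j)
    (a : Fin n → ℝ) (ha : ∀ j, 0 ≤ M.mulVec a j) :
    ∀ i, a i ≤ 0 := by
  have hpos : a⁺ = 0 := by
    by_contra hne
    exact (hneg _ hne).not_ge (posPart_dotProduct_mulVec_posPart_nonneg hoff ha)
  exact fun i => posPart_eq_zero.mp (congrFun hpos i)

/-- Key lemma (Kollár–Mori 3.41), part 1: if `M` is a negative definite symmetric
real matrix with nonnegative off-diagonal entries (an intersection matrix of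
exceptional curves) and `(M a)_j ≥ 0` for all `j`, then `a_i ≤ 0` for all `i`. -/
theorem neg_def_nonneg_mulVec_nonpos {n : ℕ} (M : Matrix (Fin n) (Fin n) ℝ)
    (hsymm : M.IsSymm)
    (hneg : ∀ x : Fin n → ℝ, x ≠ 0 → x ⬝ᵥ M.mulVec x < 0)
    (hoff : ∀ i j : Fin n, i ≠ j → 0 ≤ M i j)
    (a : Fin n → ℝ) (ha : ∀ j, 0 ≤ M.mulVec a j) :
    ∀ i, a i ≤ 0 :=
  neg_def_nonneg_mulVec_nonpos_general M hneg hoff a ha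
end

section
/- Let M be a negative definite symmetric real n×n matrix with nonnegative off-diagonal entries whose associated graph (edges where M_{ij} > 0) is connected, and let a be a real vector with (Ma)_j ≥ 0 for all j. If (Ma)_j > 0 for some j, then a_i < 0 for all i. -/
/-!
Split `a = a⁺ - a⁻`. Since the off-diagonal entries of `M` are nonnegative and `a⁺`, `a⁻` have
disjoint supports, `a⁺ ⬝ᵥ M a⁻ ≥ 0`; together with `a⁺ ⬝ᵥ M a ≥ 0` this gives
`a⁺ ⬝ᵥ M a⁺ ≥ 0`, so negative definiteness forces `a⁺ = 0`, i.e. `a ≤ 0`. If now `a k = 0`, the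
row `(M a)_k = ∑ M k j a j` is a sum of nonpositive terms that is nonnegative, so every term
vanishes and `a l = 0` for each neighbour `l` of `k`. By connectedness a single zero entry makes
`a = 0`, contradicting `(M a)_j > 0`.
-/

open Matrix

variable {ι : Type*} [Fintype ι] {M : Matrix ι ι ℝ} {a : ι → ℝ}

lemma posPart_dotProduct_mulVec_negPart_nonneg (hoff : ∀ i j, i ≠ j → 0 ≤ M i j)
    (a : ι → ℝ) : 0 ≤ a⁺ ⬝ᵥ M *ᵥ a⁻ := by
  simp only [dotProduct, mulVec, Finset.mul_sum]
  refine Finset.sum_nonneg fun i _ => Finset.sum_nonneg fun j _ => ?_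
  rcases eq_or_ne i j with rfl | hij
  · have : (a i)⁺ * (a i)⁻ = 0 := by
      rcases le_total (a i) 0 with h | h
      · rw [posPart_eq_zero.2 h, zero_mul]
      · rw [negPart_eq_zero.2 h, mul_zero]
    rw [Pi.posPart_apply, Pi.negPart_apply, mul_left_comm, this, mul_zero]
  · exact mul_nonneg (posPart_nonneg _) (mul_nonneg (hoff i j hij) (negPart_nonneg _))

lemma nonpos_of_mulVec_nonneg (hneg : ∀ x : ι → ℝ, x ≠ 0 → x ⬝ᵥ M *ᵥ x < 0)
    (hoff : ∀ i j, i ≠ j → 0 ≤ M i j) (ha : ∀ j, 0 ≤ (M *ᵥ a) j) : a ≤ 0 := by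
  rw [← posPart_eq_zero]
  by_contra hpos
  have hsplit : a⁺ ⬝ᵥ M *ᵥ a⁺ = a⁺ ⬝ᵥ M *ᵥ a + a⁺ ⬝ᵥ M *ᵥ a⁻ := by
    rw [← dotProduct_add, ← mulVec_add, eq_sub_iff_add_eq.1 (posPart_sub_negPart a).symm]
  have hpa : 0 ≤ a⁺ ⬝ᵥ M *ᵥ a := dotProduct_nonneg_of_nonneg (posPart_nonneg a) ha
  linarith [hneg _ hpos, posPart_dotProduct_mulVec_negPart_nonneg hoff a]

lemma eq_zero_of_pos_entry_of_eq_zero (hoff : ∀ i j, i ≠ j → 0 ≤ M i j)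
    (ha : ∀ j, 0 ≤ (M *ᵥ a) j) (hle : a ≤ 0) {k l : ι} (hM : 0 < M k l)
    (hk : a k = 0) : a l = 0 := by
  have hterm : ∀ j ∈ Finset.univ, M k j * a j ≤ 0 := fun j _ => by
    rcases eq_or_ne k j with rfl | hkj
    · simp [hk]
    · exact mul_nonpos_of_nonneg_of_nonpos (hoff k j hkj) (hle j)
  have hrow : ∑ j, M k j * a j = 0 := le_antisymm (Finset.sum_nonpos hterm) (ha k)
  have hl_term := (Finset.sum_eq_zero_iff_of_nonpos hterm).1 hrow l (Finset.mem_univ l)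
  exact (mul_eq_zero.1 hl_term).resolve_left hM.ne'

lemma eq_zero_of_reflTransGen (hoff : ∀ i j, i ≠ j → 0 ≤ M i j)
    (ha : ∀ j, 0 ≤ (M *ᵥ a) j) (hle : a ≤ 0) {i j : ι}
    (hij : Relation.ReflTransGen (fun k l => k ≠ l ∧ 0 < M k l) i j) (hi : a i = 0) :
    a j = 0 := by
  induction hij with
  | refl => exact hi
  | tail _ hkl ih => exact eq_zero_of_pos_entry_of_eq_zero hoff ha hle hkl.2 ih

theorem neg_def_connected_strict_general {n : ℕ} (M : Matrix (Fin n) (Fin n) ℝ)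
    (hneg : ∀ x : Fin n → ℝ, x ≠ 0 → x ⬝ᵥ M.mulVec x < 0)
    (hoff : ∀ i j : Fin n, i ≠ j → 0 ≤ M i j)
    (hconn : ∀ i j : Fin n, Relation.ReflTransGen (fun k l => k ≠ l ∧ 0 < M k l) i j)
    (a : Fin n → ℝ) (ha : ∀ j, 0 ≤ M.mulVec a j)
    (hstrict : ∃ j, 0 < M.mulVec a j) :
    ∀ i, a i < 0 := by
  have hle : a ≤ 0 := nonpos_of_mulVec_nonneg hneg hoff ha
  intro i
  refine (hle i).lt_of_ne fun hi => ?_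
  have ha0 : a = 0 := funext fun j => eq_zero_of_reflTransGen hoff ha hle (hconn i j) hi
  obtain ⟨j, hj⟩ := hstrict
  simp [ha0] at hj

/-- Key lemma, connected case with a strict inequality: if `M` is a negative
definite symmetric real matrix with nonnegative off-diagonal entries, whose
associated graph (edges where `M i j > 0`, `i ≠ j`) is connected, `(M a)_j ≥ 0`
for all `j`, and `(M a)_j > 0` for some `j`, then `a_i < 0` for all `i`. -/
theorem neg_def_connected_strict {n : ℕ} (M : Matrix (Fin n) (Fin n) ℝ)
    (hsymm : M.IsSymm)
    (hneg : ∀ x : Fin n → ℝ, x ≠ 0 → x ⬝ᵥ M.mulVec x < 0)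
    (hoff : ∀ i j : Fin n, i ≠ j → 0 ≤ M i j)
    (hconn : ∀ i j : Fin n, Relation.ReflTransGen (fun k l => k ≠ l ∧ 0 < M k l) i j)
    (a : Fin n → ℝ) (ha : ∀ j, 0 ≤ M.mulVec a j)
    (hstrict : ∃ j, 0 < M.mulVec a j) :
    ∀ i, a i < 0 :=
  neg_def_connected_strict_general M hneg hoff hconn a ha hstrict
end

section
/- Let B ⊆ ℝ be a set satisfying the descending chain condition and let a ∈ ℝ. Then there exists δ > 0 such that for all positive integers m_1,...,m_s and all β_1,...,β_s ∈ B, if Σ m_i β_i - a > 0 then Σ m_i β_i - a ≥ δ. -/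
/-!
The additive monoid generated by a well-founded set of nonnegative reals is again well-founded
(a consequence of Higman's lemma), and every sum `∑ mᵢ βᵢ` lies in it. The sums exceeding `a`
therefore have a least element, and its distance to `a` is the required gap.
-/

theorem Set.IsWF.exists_pos_gap {α : Type*} [AddCommGroup α] [LinearOrder α]
    [IsOrderedAddMonoid α] [Nontrivial α] {s : Set α} (hs : s.IsWF) (a : α) :
    ∃ δ > 0, ∀ x ∈ s, a < x → a + δ ≤ x := by
  by_cases habove : {x ∈ s | a < x}.Nonempty
  · have hwf : {x ∈ s | a < x}.IsWF := hs.mono (Set.sep_subset _ _)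
    obtain ⟨hmin_mem, hmin_gt⟩ := hwf.min_mem habove
    refine ⟨hwf.min habove - a, sub_pos.2 hmin_gt, fun x hx hax => ?_⟩
    rw [add_sub_cancel]
    exact hwf.min_le habove ⟨hx, hax⟩
  · obtain ⟨δ, hδ⟩ := exists_zero_lt (α := α)
    exact ⟨δ, hδ, fun x hx hax => absurd ⟨x, hx, hax⟩ habove⟩

theorem sum_nsmul_mem_addSubmonoid_closure {M : Type*} [AddCommMonoid M] {B : Set M} {s : ℕ}
    (m : Fin s → ℕ) {β : Fin s → M} (hβ : ∀ i, β i ∈ B) :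
    ∑ i, m i • β i ∈ AddSubmonoid.closure B :=
  AddSubmonoid.sum_mem _ fun i _ =>
    AddSubmonoid.nsmul_mem _ (AddSubmonoid.subset_closure (hβ i)) (m i)

/-- DCC gap property: if `B ⊆ [ε, 1]` (with `ε > 0`) satisfies the descending
chain condition (no strictly decreasing infinite sequence in `B`), then for any
`a ∈ ℝ` there is a `δ > 0` such that for all positive integers `m₁, …, m_s` and
all `β₁, …, β_s ∈ B`, if `∑ mᵢ βᵢ - a > 0` then `∑ mᵢ βᵢ - a ≥ δ`. -/
theorem dcc_gap (B : Set ℝ) (ε : ℝ) (hε : 0 < ε) (hB : B ⊆ Set.Icc ε 1)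
    (hDCC : ¬∃ f : ℕ → ℝ, (∀ n, f n ∈ B) ∧ StrictAnti f) (a : ℝ) :
    ∃ δ > 0, ∀ (s : ℕ) (m : Fin s → ℕ) (β : Fin s → ℝ),
      (∀ i, 0 < m i) → (∀ i, β i ∈ B) →
      0 < (∑ i, (m i : ℝ) * β i) - a → δ ≤ (∑ i, (m i : ℝ) * β i) - a := by
  have hWF : B.IsWF := Set.isWF_iff_no_descending_seq.2 fun f hf hmem => hDCC ⟨f, hmem, hf⟩
  have hnonneg : ∀ x ∈ B, 0 ≤ x := fun x hx => hε.le.trans (hB hx).1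
  have hclosureWF : (AddSubmonoid.closure B : Set ℝ).IsWF :=
    (hWF.isPWO.addSubmonoid_closure hnonneg).isWF
  obtain ⟨δ, hδ, hgap⟩ := hclosureWF.exists_pos_gap a
  refine ⟨δ, hδ, fun s m β _ hβ hpos => ?_⟩
  have hmem : ∑ i, (m i : ℝ) * β i ∈ AddSubmonoid.closure B := by
    simpa only [nsmul_eq_mul] using sum_nsmul_mem_addSubmonoid_closure m hβ
  linarith [hgap _ hmem (by linarith)]
end
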